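/- Let 𝒜 be an m-order n-dimensional strong M-tensor with a_{ii…i} = 1 for all i, let s = k = 1, let α_i ∈ [0,1] and β_j ∈ [0,1], and suppose condition (7) holds. Then the splitting 𝒜_{αβ}(1,1) = ℰ₅ − ℱ₅ is a convergent regular splitting; in particular ρ(M(ℰ₅)^{−1}ℱ₅) < 1. -/

import Mathlib

open scoped BigOperators

namespace MultilinearPaper

noncomputable section

/-- An `m`-order `n`-dimensional real tensor: the first index is separated and
the remaining `m - 1` indices are given as a function `Fin (m-1) → Fin n`. -/
abbrev Tensor (m n : ℕ) : Type := Fin n → (Fin (m - 1) → Fin n) → ℝ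

variable {m n : ℕ}

/-- The vector `𝒜 x^{m-1}` (real version):
`(𝒜 x^{m-1})_i = ∑_{i₂,…,i_m} a_{i i₂ … i_m} x_{i₂} ⋯ x_{i_m}`. -/
def tmul (A : Tensor m n) (x : Fin n → ℝ) : Fin n → ℝ :=
  fun i => ∑ f : Fin (m - 1) → Fin n, A i f * ∏ t, x (f t)

/-- The vector `𝒜 x^{m-1}` evaluated at a complex vector. -/
def tmulC (A : Tensor m n) (x : Fin n → ℂ) : Fin n → ℂ :=
  fun i => ∑ f : Fin (m - 1) → Fin n, (A i f : ℂ) * ∏ t, x (f t)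

/-- The identity tensor `𝓘`. -/
def idT (m n : ℕ) : Tensor m n :=
  fun i f => if ∀ t, f t = i then 1 else 0

/-- Entrywise nonnegativity of a tensor. -/
def TNonneg (A : Tensor m n) : Prop := ∀ i f, 0 ≤ A i f

/-- `lam` is an eigenvalue of `A`: there is `x ≠ 0` over `ℂ` with
`𝒜 x^{m-1} = lam • x^{[m-1]}`. -/
def IsEigenvalue (A : Tensor m n) (lam : ℂ) : Prop :=
  ∃ x : Fin n → ℂ, x ≠ 0 ∧ ∀ i, tmulC A x i = lam * (x i) ^ (m - 1)

/-- Spectral radius: supremum of moduli of eigenvalues. -/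
def rho (A : Tensor m n) : ℝ :=
  sSup {r : ℝ | ∃ lam : ℂ, IsEigenvalue A lam ∧ r = ‖lam‖}

/-- `A` is a strong M-tensor: `A = η 𝓘 - B` with `B ≥ 0` and `η > ρ(B)`. -/
def StrongM (A : Tensor m n) : Prop :=
  ∃ (η : ℝ) (B : Tensor m n), TNonneg B ∧ rho B < η ∧ A = η • idT m n - B

/-- Matrix–tensor product `(P𝓑)_{j i₂…i_m} = ∑_{j₂} P_{j j₂} b_{j₂ i₂ … i_m}`. -/
def mmul (P : Matrix (Fin n) (Fin n) ℝ) (A : Tensor m n) : Tensor m n :=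
  fun j f => ∑ j₂, P j j₂ * A j₂ f

/-- Majorization matrix `M(𝒜)_{ij} = a_{i j … j}`. -/
def maj (A : Tensor m n) : Matrix (Fin n) (Fin n) ℝ :=
  fun i j => A i (fun _ => j)

/-- `a_{i i … i} = 1` for all `i`. -/
def UnitDiag (A : Tensor m n) : Prop := ∀ i, A i (fun _ => i) = 1

/-- `L`: the negatives of the strictly lower triangular entries of `M(𝒜)`. -/
def Lmat (A : Tensor m n) : Matrix (Fin n) (Fin n) ℝ :=
  fun i j => if (j : ℕ) < (i : ℕ) then -maj A i j else 0

/-- `𝓛 = L𝓘`. -/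
def Ltens (A : Tensor m n) : Tensor m n := mmul (Lmat A) (idT m n)

/-- `𝓕 = 𝓘 - 𝓛 - 𝒜`. -/
def Ftens (A : Tensor m n) : Tensor m n := idT m n - Ltens A - A

/-- The matrix `S_α^s`, with `(S_α^s)_{i,i+s} = -α_i a_{i(i+s)…(i+s)}`. -/
def Smat (A : Tensor m n) (α : Fin n → ℝ) (s : ℕ) : Matrix (Fin n) (Fin n) ℝ :=
  fun i j => if (j : ℕ) = (i : ℕ) + s then -(α i * maj A i j) else 0

/-- The matrix `K_β^k`, with `(K_β^k)_{i,i-k} = -β_i a_{i(i-k)…(i-k)}`. -/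
def Kmat (A : Tensor m n) (β : Fin n → ℝ) (k : ℕ) : Matrix (Fin n) (Fin n) ℝ :=
  fun i j => if (i : ℕ) = (j : ℕ) + k then -(β i * maj A i j) else 0

/-- The preconditioner `P_{αβ}(s,k) = I + S_α^s + K_β^k`. -/
def Pmat (A : Tensor m n) (α β : Fin n → ℝ) (s k : ℕ) : Matrix (Fin n) (Fin n) ℝ :=
  1 + Smat A α s + Kmat A β k

/-- The preconditioned tensor `𝒜_{αβ}(s,k) = P_{αβ}(s,k) 𝒜`. -/
def precond (A : Tensor m n) (α β : Fin n → ℝ) (s k : ℕ) : Tensor m n :=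
  mmul (Pmat A α β s k) A

/- Jacobi-type splittings. -/

def E1 (A : Tensor m n) (α β : Fin n → ℝ) (s k : ℕ) : Tensor m n :=
  mmul (Pmat A α β s k) (idT m n)

def F1 (A : Tensor m n) (α β : Fin n → ℝ) (s k : ℕ) : Tensor m n :=
  mmul (Pmat A α β s k) (Ltens A + Ftens A)

def F2 (A : Tensor m n) (α β : Fin n → ℝ) (s k : ℕ) : Tensor m n :=
  mmul (Pmat A α β s k) (Ltens A + Ftens A) - mmul (Smat A α s + Kmat A β k) (idT m n)

def F3 (A : Tensor m n) (α : Fin n → ℝ) (s : ℕ) : Tensor m n :=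
  mmul (1 + Smat A α s) (Ltens A + Ftens A) - mmul (Smat A α s) (idT m n)

def F4 (A : Tensor m n) (β : Fin n → ℝ) (k : ℕ) : Tensor m n :=
  mmul (1 + Kmat A β k) (Ltens A + Ftens A) - mmul (Kmat A β k) (idT m n)

/-- `S`: the matrix `S_α^1` with all parameters equal to `1`. -/
def Sfull (A : Tensor m n) : Matrix (Fin n) (Fin n) ℝ := Smat A (fun _ => 1) 1

/-- `K`: the matrix `K_β^1` with all parameters equal to `1`. -/
def Kfull (A : Tensor m n) : Matrix (Fin n) (Fin n) ℝ := Kmat A (fun _ => 1) 1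

/-- `𝓛′` with `𝓛 = K𝓘 + 𝓛′`. -/
def Lprime (A : Tensor m n) : Tensor m n := Ltens A - mmul (Kfull A) (idT m n)

/-- `𝓕′` with `𝓕 = S𝓘 + 𝓕′`. -/
def Fprime (A : Tensor m n) : Tensor m n := Ftens A - mmul (Sfull A) (idT m n)

/-- `ℰ₅ = (I - S_α K - K_β S)𝓘`. -/
def E5 (A : Tensor m n) (α β : Fin n → ℝ) : Tensor m n :=
  mmul (1 - Smat A α 1 * Kfull A - Kmat A β 1 * Sfull A) (idT m n)

/-- `ℱ₅ = 𝓛 + 𝓕 - (S_α + K_β)𝓘 + S_α(𝓛′ + 𝓕) + K_β(𝓛 + 𝓕′)`. -/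
def F5 (A : Tensor m n) (α β : Fin n → ℝ) : Tensor m n :=
  Ltens A + Ftens A - mmul (Smat A α 1 + Kmat A β 1) (idT m n)
    + mmul (Smat A α 1) (Lprime A + Ftens A) + mmul (Kmat A β 1) (Ltens A + Fprime A)

def finShiftUp (i : Fin n) (s : ℕ) (h : (i : ℕ) + s < n) : Fin n := ⟨(i : ℕ) + s, h⟩

def finShiftDown (i : Fin n) (k : ℕ) : Fin n :=
  ⟨(i : ℕ) - k, lt_of_le_of_lt (Nat.sub_le _ _) i.isLt⟩

/-- The `i`-th quantity appearing in conditions (7) and (11):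
`α_i a_{i(i+k)…(i+k)} a_{(i+k)i…i} + β_i a_{i(i-k)…(i-k)} a_{(i-k)i…i}`,
with each term dropped when its index is out of range. -/
def condExpr (A : Tensor m n) (α β : Fin n → ℝ) (k : ℕ) (i : Fin n) : ℝ :=
  (if h : (i : ℕ) + k < n then
      α i * maj A i (finShiftUp i k h) * maj A (finShiftUp i k h) i
    else 0) +
  (if k ≤ (i : ℕ) then
      β i * maj A i (finShiftDown i k) * maj A (finShiftDown i k) i
    else 0)

/-- Conditions (7) (for `k = 1`) and (11) (for general `k = s`). -/
def Cond (A : Tensor m n) (α β : Fin n → ℝ) (k : ℕ) : Prop :=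
  ∀ i : Fin n, 0 < condExpr A α β k i ∧ condExpr A α β k i < 1

/- Gauss–Seidel-type splittings. -/

/-- The diagonal part of `M(T)` as a matrix. -/
def DmatOf (T : Tensor m n) : Matrix (Fin n) (Fin n) ℝ :=
  fun i j => if i = j then maj T i j else 0

/-- The strictly lower triangular part of `M(T)` as a matrix. -/
def LmatOf (T : Tensor m n) : Matrix (Fin n) (Fin n) ℝ :=
  fun i j => if (j : ℕ) < (i : ℕ) then maj T i j else 0

/-- `𝓓_α = D_α 𝓘` from `S_α^s 𝓛 = 𝓓_α + 𝓛_α + 𝓕_α`. -/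
def Dalpha (A : Tensor m n) (α : Fin n → ℝ) (s : ℕ) : Tensor m n :=
  mmul (DmatOf (mmul (Smat A α s) (Ltens A))) (idT m n)

def Lalpha (A : Tensor m n) (α : Fin n → ℝ) (s : ℕ) : Tensor m n :=
  mmul (LmatOf (mmul (Smat A α s) (Ltens A))) (idT m n)

def Falpha (A : Tensor m n) (α : Fin n → ℝ) (s : ℕ) : Tensor m n :=
  mmul (Smat A α s) (Ltens A) - Dalpha A α s - Lalpha A α s

/-- `𝓓_β = D_β 𝓘` from `K_β^k 𝓕 = 𝓓_β + 𝓛_β + 𝓕_β`. -/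
def Dbeta (A : Tensor m n) (β : Fin n → ℝ) (k : ℕ) : Tensor m n :=
  mmul (DmatOf (mmul (Kmat A β k) (Ftens A))) (idT m n)

def Lbeta (A : Tensor m n) (β : Fin n → ℝ) (k : ℕ) : Tensor m n :=
  mmul (LmatOf (mmul (Kmat A β k) (Ftens A))) (idT m n)

def Fbeta (A : Tensor m n) (β : Fin n → ℝ) (k : ℕ) : Tensor m n :=
  mmul (Kmat A β k) (Ftens A) - Dbeta A β k - Lbeta A β k

def M1 (A : Tensor m n) (α β : Fin n → ℝ) (s k : ℕ) : Tensor m n :=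
  mmul (Pmat A α β s k) (idT m n - Ltens A)

def N1 (A : Tensor m n) (α β : Fin n → ℝ) (s k : ℕ) : Tensor m n :=
  mmul (Pmat A α β s k) (Ftens A)

def M2 (A : Tensor m n) (α β : Fin n → ℝ) (s k : ℕ) : Tensor m n :=
  idT m n - Ltens A + mmul (Kmat A β k) (idT m n) - mmul (Kmat A β k) (Ltens A)
    - Dalpha A α s - Lalpha A α s - Dbeta A β k - Lbeta A β k

def N2 (A : Tensor m n) (α β : Fin n → ℝ) (s k : ℕ) : Tensor m n :=
  Ftens A - mmul (Smat A α s) (idT m n) + mmul (Smat A α s) (Ftens A)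
    + Falpha A α s + Fbeta A β k

def M3 (A : Tensor m n) (α : Fin n → ℝ) (s : ℕ) : Tensor m n :=
  idT m n - Ltens A - Dalpha A α s - Lalpha A α s

def N3 (A : Tensor m n) (α : Fin n → ℝ) (s : ℕ) : Tensor m n :=
  Ftens A - mmul (Smat A α s) (idT m n) + mmul (Smat A α s) (Ftens A) + Falpha A α s

def M4 (A : Tensor m n) (β : Fin n → ℝ) (k : ℕ) : Tensor m n :=
  mmul (1 + Kmat A β k) (idT m n - Ltens A) - Dbeta A β k - Lbeta A β k

def N4 (A : Tensor m n) (β : Fin n → ℝ) (k : ℕ) : Tensor m n :=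
  Ftens A + Fbeta A β k

/- Preconditioned SOR. -/

def Dab (A : Tensor m n) (α β : Fin n → ℝ) (s k : ℕ) : Tensor m n :=
  idT m n - Dalpha A α s - Dbeta A β k

def Lab (A : Tensor m n) (α β : Fin n → ℝ) (s k : ℕ) : Tensor m n :=
  Ltens A - mmul (Kmat A β k) (idT m n) + mmul (Kmat A β k) (Ltens A)
    + Lalpha A α s + Lbeta A β k

def Fab (A : Tensor m n) (α β : Fin n → ℝ) (s k : ℕ) : Tensor m n :=
  Ftens A - mmul (Smat A α s) (idT m n) + mmul (Smat A α s) (Ftens A)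
    + Falpha A α s + Fbeta A β k

def Eomega (A : Tensor m n) (α β : Fin n → ℝ) (s k : ℕ) (ω : ℝ) : Tensor m n :=
  (1 / ω) • (Dab A α β s k - ω • Lab A α β s k)

def Fomega (A : Tensor m n) (α β : Fin n → ℝ) (s k : ℕ) (ω : ℝ) : Tensor m n :=
  (1 / ω) • ((1 - ω) • Dab A α β s k + ω • Fab A α β s k)

/-- Preconditioned SOR iteration tensor `ℋ_{αβ}(ω)`. -/
def Hsor (A : Tensor m n) (α β : Fin n → ℝ) (s k : ℕ) (ω : ℝ) : Tensor m n :=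
  mmul (maj (Eomega A α β s k ω))⁻¹ (Fomega A α β s k ω)

/-- Unpreconditioned SOR iteration tensor `ℋ(ω) = M(𝓘-ω𝓛)^{-1}((1-ω)𝓘+ω𝓕)`. -/
def Hu (A : Tensor m n) (ω : ℝ) : Tensor m n :=
  mmul (maj (idT m n - ω • Ltens A))⁻¹ ((1 - ω) • idT m n + ω • Ftens A)

/-- A tensor is reducible if there is a nonempty proper index subset `I` with
`a_{i₁ i₂ … i_m} = 0` whenever `i₁ ∈ I` and `i₂, …, i_m ∉ I`. -/
def TReducible (A : Tensor m n) : Prop :=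
  ∃ I : Set (Fin n), I.Nonempty ∧ I ≠ Set.univ ∧
    ∀ i f, i ∈ I → (∀ t, f t ∉ I) → A i f = 0


/-! ### Auxiliary lemmas -/

section AuxAlg

lemma mmul_add_right (M : Matrix (Fin n) (Fin n) ℝ) (T U : Tensor m n) :
    mmul M (T + U) = mmul M T + mmul M U := by
  funext i f
  simp [mmul, mul_add, Finset.sum_add_distrib]

lemma mmul_sub_right (M : Matrix (Fin n) (Fin n) ℝ) (T U : Tensor m n) :
    mmul M (T - U) = mmul M T - mmul M U := by
  funext i f
  simp [mmul, mul_sub, Finset.sum_sub_distrib]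

lemma mmul_add_left (M N : Matrix (Fin n) (Fin n) ℝ) (T : Tensor m n) :
    mmul (M + N) T = mmul M T + mmul N T := by
  funext i f
  simp [mmul, add_mul, Finset.sum_add_distrib, Matrix.add_apply]

lemma mmul_sub_left (M N : Matrix (Fin n) (Fin n) ℝ) (T : Tensor m n) :
    mmul (M - N) T = mmul M T - mmul N T := by
  funext i f
  simp [mmul, sub_mul, Finset.sum_sub_distrib, Matrix.sub_apply]

lemma mmul_one (T : Tensor m n) : mmul 1 T = T := by
  funext i f
  simp [mmul, Matrix.one_apply, ite_mul]

lemma mmul_mul (M N : Matrix (Fin n) (Fin n) ℝ) (T : Tensor m n) :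
    mmul (M * N) T = mmul M (mmul N T) := by
  funext i f
  simp only [mmul, Matrix.mul_apply, Finset.sum_mul, Finset.mul_sum]
  rw [Finset.sum_comm]
  simp [mul_assoc]

lemma E5_sub_F5 (A : Tensor m n) (α β : Fin n → ℝ) :
    E5 A α β - F5 A α β = precond A α β 1 1 := by
  simp only [E5, F5, precond, Pmat, Lprime, Fprime, Sfull, Kfull, Ftens,
    mmul_sub_left, mmul_add_left, mmul_sub_right, mmul_add_right, mmul_mul, mmul_one]
  abel

lemma tmul_mmul (M : Matrix (Fin n) (Fin n) ℝ) (T : Tensor m n) (x : Fin n → ℝ) (i : Fin n) :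
    tmul (mmul M T) x i = ∑ j, M i j * tmul T x j := by
  simp only [tmul, mmul, Finset.sum_mul, Finset.mul_sum]
  rw [Finset.sum_comm]
  simp [mul_assoc]

lemma tmul_sub (T U : Tensor m n) (x : Fin n → ℝ) :
    tmul (T - U) x = tmul T x - tmul U x := by
  funext i
  simp [tmul, sub_mul, Finset.sum_sub_distrib]

lemma tmul_idT (_hm : 2 ≤ m) (x : Fin n → ℝ) (i : Fin n) :
    tmul (idT m n) x i = x i ^ (m - 1) := by
  classical
  rw [tmul, Finset.sum_eq_single (fun _ => i)]
  · simp [idT, Finset.prod_const]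
  · intro f _ hf
    have : ¬ (∀ t, f t = i) := fun h => hf (funext h)
    simp [idT, this]
  · simp

lemma tmul_smul (T : Tensor m n) (c : ℝ) (x : Fin n → ℝ) (i : Fin n) :
    tmul T (c • x) i = c ^ (m - 1) * tmul T x i := by
  simp only [tmul, Pi.smul_apply, smul_eq_mul, Finset.mul_sum]
  refine Finset.sum_congr rfl fun f _ => ?_
  rw [Finset.prod_mul_distrib, Finset.prod_const]
  simp [Finset.card_univ]
  ring

lemma tmul_mono (T : Tensor m n) (hT : TNonneg T) {x y : Fin n → ℝ}
    (hx : ∀ i, 0 ≤ x i) (hxy : ∀ i, x i ≤ y i) (i : Fin n) :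
    tmul T x i ≤ tmul T y i := by
  refine Finset.sum_le_sum fun f _ => ?_
  refine mul_le_mul_of_nonneg_left ?_ (hT i f)
  exact Finset.prod_le_prod (fun t _ => hx (f t)) (fun t _ => hxy (f t))

lemma tmul_nonneg (T : Tensor m n) (hT : TNonneg T) {x : Fin n → ℝ}
    (hx : ∀ i, 0 ≤ x i) (i : Fin n) : 0 ≤ tmul T x i := by
  refine Finset.sum_nonneg fun f _ => mul_nonneg (hT i f) ?_
  exact Finset.prod_nonneg fun t _ => hx (f t)

lemma tmul_allones (x : Fin n → ℝ) (i : Fin n) :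
    tmul (fun _ _ => (1:ℝ) : Tensor m n) x i = (∑ j, x j) ^ (m - 1) := by
  simp only [tmul, one_mul]
  have h : (∑ j, x j) ^ (m - 1) = ∏ _t : Fin (m - 1), (∑ j, x j) := by
    simp [Finset.prod_const, Finset.card_univ]
  rw [h, Finset.prod_univ_sum]
  simp

lemma cont_tmul (T : Tensor m n) (i : Fin n) : Continuous fun x : Fin n → ℝ => tmul T x i := by
  unfold tmul
  exact continuous_finset_sum _ fun f _ =>
    continuous_const.mul (continuous_finset_prod _ fun t _ => continuous_apply (f t))

end AuxAlg


section AuxEig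

lemma eig_bound (T : Tensor m n) (d : Fin n → ℝ) (hd : ∀ i, 0 < d i)
    (lam : ℂ) (h : IsEigenvalue T lam) :
    ∃ i, ‖lam‖ * d i ^ (m - 1) ≤ ∑ f, |T i f| * ∏ t, d (f t) := by
  classical
  obtain ⟨x, hx0, heq⟩ := h
  have hex : ∃ j, x j ≠ 0 := by
    by_contra hjj
    push_neg at hjj
    exact hx0 (funext hjj)
  obtain ⟨j0, hj0⟩ := hex
  haveI : Nonempty (Fin n) := ⟨j0⟩
  obtain ⟨i, -, hi⟩ := Finset.exists_max_image Finset.univ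
    (fun j => ‖x j‖ / d j) ⟨j0, Finset.mem_univ j0⟩
  set r := ‖x i‖ / d i with hr
  have hrpos : 0 < r :=
    lt_of_lt_of_le (div_pos (norm_pos_iff.mpr hj0) (hd j0)) (hi j0 (Finset.mem_univ j0))
  have hb : ∀ j, ‖x j‖ ≤ r * d j := by
    intro j
    have h1 := hi j (Finset.mem_univ j)
    rw [div_le_iff₀ (hd j)] at h1
    linarith [h1]
  have hxi : ‖x i‖ = r * d i := by
    rw [hr, div_mul_cancel₀]
    exact ne_of_gt (hd i)
  have key : ‖lam‖ * ‖x i‖ ^ (m - 1) ≤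
      ∑ f, |T i f| * ∏ t, (r * d (f t)) := by
    calc ‖lam‖ * ‖x i‖ ^ (m - 1)
        = ‖lam * x i ^ (m - 1)‖ := by rw [norm_mul, norm_pow]
      _ = ‖tmulC T x i‖ := by rw [heq i]
      _ ≤ ∑ f, ‖(T i f : ℂ) * ∏ t, x (f t)‖ := norm_sum_le _ _
      _ ≤ _ := by
          refine Finset.sum_le_sum fun f _ => ?_
          rw [norm_mul, Complex.norm_real, Real.norm_eq_abs, norm_prod]
          refine mul_le_mul_of_nonneg_left ?_ (abs_nonneg _)
          exact Finset.prod_le_prod (fun t _ => norm_nonneg _) (fun t _ => hb (f t))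
  have hright : ∑ f, |T i f| * ∏ t, (r * d (f t)) =
      r ^ (m - 1) * ∑ f, |T i f| * ∏ t, d (f t) := by
    rw [Finset.mul_sum]
    refine Finset.sum_congr rfl fun f _ => ?_
    rw [Finset.prod_mul_distrib, Finset.prod_const, Finset.card_univ, Fintype.card_fin]
    ring
  rw [hxi, mul_pow, hright] at key
  refine ⟨i, ?_⟩
  have hrp : 0 < r ^ (m - 1) := pow_pos hrpos _
  have key2 : r ^ (m - 1) * (‖lam‖ * d i ^ (m - 1)) ≤
      r ^ (m - 1) * (∑ f, |T i f| * ∏ t, d (f t)) := by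
    calc r ^ (m - 1) * (‖lam‖ * d i ^ (m - 1))
        = ‖lam‖ * (r ^ (m - 1) * d i ^ (m - 1)) := by ring
      _ ≤ _ := key
  exact le_of_mul_le_mul_left key2 hrp

lemma bddAbove_eigset (T : Tensor m n) :
    BddAbove {r : ℝ | ∃ lam : ℂ, IsEigenvalue T lam ∧ r = ‖lam‖} := by
  refine ⟨∑ i, ∑ f, |T i f|, fun r hr => ?_⟩
  obtain ⟨lam, hl, rfl⟩ := hr
  obtain ⟨i, hi⟩ := eig_bound T (fun _ => 1) (fun _ => one_pos) lam hl
  simp only [one_pow, mul_one, Finset.prod_const, one_pow] at hi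
  calc ‖lam‖ ≤ ∑ f, |T i f| := by simpa using hi
    _ ≤ ∑ i, ∑ f, |T i f| :=
        Finset.single_le_sum (f := fun j => ∑ f, |T j f|)
          (fun j _ => Finset.sum_nonneg fun f _ => abs_nonneg _) (Finset.mem_univ i)

lemma rho_le_of_forall (T : Tensor m n) (c : ℝ) (hc : 0 ≤ c)
    (h : ∀ lam : ℂ, IsEigenvalue T lam → ‖lam‖ ≤ c) : rho T ≤ c := by
  refine Real.sSup_le ?_ hc
  rintro r ⟨lam, hl, rfl⟩
  exact h lam hl

lemma le_rho (T : Tensor m n) (lam : ℂ) (h : IsEigenvalue T lam) :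
    ‖lam‖ ≤ rho T :=
  le_csSup (bddAbove_eigset T) ⟨lam, h, rfl⟩

end AuxEig


section AuxPF

lemma tmul_update_ge (C : Tensor m n) (hC : TNonneg C) (x : Fin n → ℝ)
    (hx : ∀ i, 0 ≤ x i) (j : Fin n) (v : ℝ) (hv : x j ≤ v) (i : Fin n) :
    tmul C x i + C i (fun _ => j) * (v ^ (m - 1) - x j ^ (m - 1)) ≤
      tmul C (Function.update x j v) i := by
  classical
  set x' := Function.update x j v with hx'
  have hxle : ∀ t, x t ≤ x' t := by
    intro t
    by_cases h : t = j
    · subst h; simp only [hx', Function.update_self]; exact hv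
    · simp only [hx', Function.update_of_ne h]; exact le_refl _
  have hsplit : ∀ y : Fin n → ℝ, tmul C y i
      = C i (fun _ => j) * (y j) ^ (m - 1) +
        ∑ f ∈ Finset.univ.erase (fun _ => j), C i f * ∏ t, y (f t) := by
    intro y
    rw [tmul, ← Finset.add_sum_erase _ _ (Finset.mem_univ (fun _ => j))]
    simp [Finset.prod_const, Finset.card_univ]
  rw [hsplit x, hsplit x']
  have h1 : ∑ f ∈ Finset.univ.erase (fun _ => j), C i f * ∏ t, x (f t)
      ≤ ∑ f ∈ Finset.univ.erase (fun _ => j), C i f * ∏ t, x' (f t) := by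
    refine Finset.sum_le_sum fun f _ => mul_le_mul_of_nonneg_left ?_ (hC i f)
    exact Finset.prod_le_prod (fun t _ => hx (f t)) (fun t _ => hxle (f t))
  have h2 : x' j = v := Function.update_self j v x
  rw [h2, mul_sub]
  linarith

lemma exists_pos_eigenpair (hm : 2 ≤ m) (hn : 1 ≤ n) (C : Tensor m n)
    (hC : ∀ i f, 0 < C i f) :
    ∃ (lam : ℝ) (x : Fin n → ℝ), 0 ≤ lam ∧ (∀ i, 0 < x i) ∧ (∑ i, x i = 1) ∧
      ∀ i, tmul C x i = lam * x i ^ (m - 1) := by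
  classical
  have hnpos : 0 < n := hn
  haveI : Nonempty (Fin n) := ⟨⟨0, hnpos⟩⟩
  have ha : m - 1 ≠ 0 := by omega
  have hC0 : TNonneg C := fun i f => (hC i f).le
  set RS : ℝ := ∑ j, tmul C (fun _ => 1) j with hRS
  have hRS0 : 0 ≤ RS :=
    Finset.sum_nonneg fun j _ => tmul_nonneg C hC0 (fun _ => zero_le_one) j
  set Λ : ℝ := (n : ℝ) ^ (m - 1) * RS + 1 with hΛ
  have hΛ0 : 0 ≤ Λ := by
    have : (0:ℝ) ≤ (n : ℝ) ^ (m - 1) * RS := mul_nonneg (by positivity) hRS0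
    rw [hΛ]; linarith
  set K : Set (ℝ × (Fin n → ℝ)) :=
    {p | 0 ≤ p.1 ∧ p.1 ≤ Λ ∧ (∀ i, 0 ≤ p.2 i) ∧ (∑ i, p.2 i) = 1 ∧
      ∀ i, p.1 * p.2 i ^ (m - 1) ≤ tmul C p.2 i} with hK
  have hle1 : ∀ (x : Fin n → ℝ), (∀ i, 0 ≤ x i) → (∑ i, x i) = 1 → ∀ i, x i ≤ 1 := by
    intro x h0 hs i
    calc x i ≤ ∑ j, x j := Finset.single_le_sum (fun j _ => h0 j) (Finset.mem_univ i)
      _ = 1 := hs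
  have hKc : IsCompact K := by
    have hsub : K ⊆ Set.Icc (0:ℝ) Λ ×ˢ Set.pi Set.univ (fun _ : Fin n => Set.Icc (0:ℝ) 1) := by
      rintro ⟨lam, x⟩ ⟨h1, h2, h3, h4, -⟩
      exact ⟨⟨h1, h2⟩, fun i _ => ⟨h3 i, hle1 x h3 h4 i⟩⟩
    refine IsCompact.of_isClosed_subset
      (isCompact_Icc.prod (isCompact_univ_pi fun _ => isCompact_Icc)) ?_ hsub
    have hKeq : K = ({p : ℝ × (Fin n → ℝ) | 0 ≤ p.1} ∩ {p | p.1 ≤ Λ} ∩ {p | ∀ i, 0 ≤ p.2 i}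
        ∩ {p | (∑ i, p.2 i) = 1} ∩ {p | ∀ i, p.1 * p.2 i ^ (m - 1) ≤ tmul C p.2 i}) := by
      ext p
      simp only [hK, Set.mem_setOf_eq, Set.mem_inter_iff]
      tauto
    rw [hKeq]
    refine (((IsClosed.inter ?_ ?_).inter ?_).inter ?_).inter ?_
    · exact isClosed_le continuous_const continuous_fst
    · exact isClosed_le continuous_fst continuous_const
    · have h3 : {p : ℝ × (Fin n → ℝ) | ∀ i, 0 ≤ p.2 i} = ⋂ i, {p | 0 ≤ p.2 i} := by
        ext p; simp
      rw [h3]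
      exact isClosed_iInter fun i =>
        isClosed_le continuous_const ((continuous_apply i).comp continuous_snd)
    · exact isClosed_eq
        (continuous_finset_sum _ fun i _ => (continuous_apply i).comp continuous_snd)
        continuous_const
    · have h5 : {p : ℝ × (Fin n → ℝ) | ∀ i, p.1 * p.2 i ^ (m - 1) ≤ tmul C p.2 i}
          = ⋂ i, {p | p.1 * p.2 i ^ (m - 1) ≤ tmul C p.2 i} := by
        ext p; simp
      rw [h5]
      refine isClosed_iInter fun i => isClosed_le ?_ ?_
      · exact continuous_fst.mul (((continuous_apply i).comp continuous_snd).pow _)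
      · exact (cont_tmul C i).comp continuous_snd
  have hKne : K.Nonempty := by
    refine ⟨(0, fun _ => (n : ℝ)⁻¹), le_refl 0, hΛ0, fun i => by positivity, ?_, fun i => ?_⟩
    · simp only [Finset.sum_const, Finset.card_univ, Fintype.card_fin, nsmul_eq_mul]
      field_simp
    · have : (0:ℝ) ≤ tmul C (fun _ => (n : ℝ)⁻¹) i :=
        tmul_nonneg C hC0 (fun _ => by positivity) i
      simpa using this
  obtain ⟨p, hpK, hmax⟩ := hKc.exists_isMaxOn hKne continuous_fst.continuousOn
  obtain ⟨lam, x⟩ := p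
  obtain ⟨hl0, hlΛ, hx0, hxs, hcons⟩ := hpK
  -- Step A : bound on lam
  have hstepA : lam ≤ (n : ℝ) ^ (m - 1) * RS := by
    have hsum1 : ∑ _i : Fin n, (n : ℝ)⁻¹ = 1 := by
      simp only [Finset.sum_const, Finset.card_univ, Fintype.card_fin, nsmul_eq_mul]
      field_simp
    obtain ⟨i, -, hi⟩ := Finset.exists_le_of_sum_le (Finset.univ_nonempty)
      (le_of_eq (hsum1.trans hxs.symm))
    have h1 : lam * ((n:ℝ)⁻¹) ^ (m - 1) ≤ RS := by
      calc lam * ((n:ℝ)⁻¹) ^ (m - 1) ≤ lam * x i ^ (m - 1) :=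
            mul_le_mul_of_nonneg_left (pow_le_pow_left₀ (by positivity) hi _) hl0
        _ ≤ tmul C x i := hcons i
        _ ≤ tmul C (fun _ => 1) i := tmul_mono C hC0 hx0 (hle1 x hx0 hxs) i
        _ ≤ RS := Finset.single_le_sum (f := fun j => tmul C (fun _ => 1) j)
            (fun j _ => tmul_nonneg C hC0 (fun _ => zero_le_one) j) (Finset.mem_univ i)
    have hnn : ((n:ℝ)⁻¹) ^ (m - 1) * (n:ℝ) ^ (m - 1) = 1 := by
      rw [← mul_pow]
      field_simp
      exact one_pow _
    calc lam = lam * (((n:ℝ)⁻¹) ^ (m - 1) * (n:ℝ) ^ (m - 1)) := by rw [hnn, mul_one]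
      _ = (lam * ((n:ℝ)⁻¹) ^ (m - 1)) * (n:ℝ) ^ (m - 1) := by ring
      _ ≤ RS * (n:ℝ) ^ (m - 1) := mul_le_mul_of_nonneg_right h1 (by positivity)
      _ = (n:ℝ) ^ (m - 1) * RS := by ring
  -- improvement contradiction
  have himp : ∀ (lam' : ℝ) (x' : Fin n → ℝ), lam < lam' → lam' ≤ Λ → (∀ i, 0 ≤ x' i) →
      (0 < ∑ i, x' i) → (∀ i, lam' * x' i ^ (m - 1) ≤ tmul C x' i) → False := by
    intro lam' x' hgt hleΛ hnn hposσ hcons'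
    set σ := ∑ i, x' i with hσ
    have hσ0 : σ ≠ 0 := ne_of_gt hposσ
    have hyK : (lam', σ⁻¹ • x') ∈ K := by
      refine ⟨le_trans hl0 hgt.le, hleΛ, fun i => ?_, ?_, fun i => ?_⟩
      · have : 0 ≤ σ⁻¹ * x' i := mul_nonneg (inv_nonneg.mpr hposσ.le) (hnn i)
        simpa using this
      · simp only [Pi.smul_apply, smul_eq_mul, ← Finset.mul_sum]
        rw [← hσ]
        exact inv_mul_cancel₀ hσ0
      · rw [tmul_smul]
        have h2 : ((σ⁻¹ • x') i) ^ (m - 1) = σ⁻¹ ^ (m - 1) * x' i ^ (m - 1) := by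
          simp [mul_pow]
        rw [h2]
        calc lam' * (σ⁻¹ ^ (m - 1) * x' i ^ (m - 1))
            = σ⁻¹ ^ (m - 1) * (lam' * x' i ^ (m - 1)) := by ring
          _ ≤ σ⁻¹ ^ (m - 1) * tmul C x' i :=
            mul_le_mul_of_nonneg_left (hcons' i) (by positivity)
    exact absurd (hmax hyK) (not_le.mpr hgt)
  -- improvement from a single coordinate
  have himpj : ∀ (j : Fin n) (ε : ℝ), 0 < ε →
      (Finset.univ.inf' Finset.univ_nonempty (fun i => C i (fun _ => j))) * ε ^ (m - 1) ≤ 1 →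
      (lam + (Finset.univ.inf' Finset.univ_nonempty (fun i => C i (fun _ => j))) * ε ^ (m - 1))
          * (x j + ε) ^ (m - 1) ≤ tmul C x j →
      False := by
    intro j ε hε hc1 hj
    set c := Finset.univ.inf' Finset.univ_nonempty (fun i => C i (fun _ => j)) with hcdef
    have hcpos : 0 < c := by
      rw [hcdef, Finset.lt_inf'_iff]
      exact fun i _ => hC i _
    have hcle : ∀ i, c ≤ C i (fun _ => j) := fun i => Finset.inf'_le _ (Finset.mem_univ i)
    set lam' := lam + c * ε ^ (m - 1) with hlam'
    set x' := Function.update x j (x j + ε) with hx'def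
    have hgain : ∀ i, tmul C x i + C i (fun _ => j) * ε ^ (m - 1) ≤ tmul C x' i := by
      intro i
      have h1 := tmul_update_ge C hC0 x hx0 j (x j + ε) (by linarith) i
      have h2 : x j ^ (m - 1) + ε ^ (m - 1) ≤ (x j + ε) ^ (m - 1) :=
        pow_add_pow_le (hx0 j) hε.le ha
      have h3 : C i (fun _ => j) * ε ^ (m - 1)
          ≤ C i (fun _ => j) * ((x j + ε) ^ (m - 1) - x j ^ (m - 1)) :=
        mul_le_mul_of_nonneg_left (by linarith) (hC0 i _)
      linarith
    have hx'0 : ∀ i, 0 ≤ x' i := by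
      intro i
      by_cases h : i = j
      · subst h; rw [hx'def, Function.update_self]; linarith [hx0 i]
      · rw [hx'def, Function.update_of_ne h]; exact hx0 i
    have hsum' : ∑ i, x' i = 1 + ε := by
      rw [hx'def, ← Finset.add_sum_erase _ _ (Finset.mem_univ j), Function.update_self]
      have heq : ∑ i ∈ Finset.univ.erase j, Function.update x j (x j + ε) i
          = ∑ i ∈ Finset.univ.erase j, x i :=
        Finset.sum_congr rfl fun i hi => Function.update_of_ne (Finset.ne_of_mem_erase hi) _ _
      rw [heq]
      have h4 : x j + ∑ i ∈ Finset.univ.erase j, x i = 1 := by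
        rw [Finset.add_sum_erase _ _ (Finset.mem_univ j)]
        exact hxs
      linarith
    refine himp lam' x' ?_ ?_ hx'0 (by rw [hsum']; linarith) ?_
    · have h5 : 0 < c * ε ^ (m - 1) := mul_pos hcpos (pow_pos hε _)
      rw [hlam']; linarith
    · rw [hlam', hΛ]; linarith [hstepA]
    · intro i
      by_cases hij : i = j
      · subst hij
        have h6 : x' i = x i + ε := by rw [hx'def, Function.update_self]
        rw [h6]
        have h7 : tmul C x i ≤ tmul C x' i := by
          have := hgain i
          have h8 : 0 ≤ C i (fun _ => i) * ε ^ (m - 1) :=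
            mul_nonneg (hC0 i _) (pow_nonneg hε.le _)
          linarith
        calc lam' * (x i + ε) ^ (m - 1) ≤ tmul C x i := hj
          _ ≤ tmul C x' i := h7
      · have hx'i : x' i = x i := Function.update_of_ne hij _ _
        rw [hx'i]
        have hxi1 : x i ≤ 1 := hle1 x hx0 hxs i
        have h5 : c * ε ^ (m - 1) * x i ^ (m - 1) ≤ c * ε ^ (m - 1) * 1 :=
          mul_le_mul_of_nonneg_left (pow_le_one₀ (hx0 i) hxi1) (by positivity)
        have h6 : c * ε ^ (m - 1) ≤ C i (fun _ => j) * ε ^ (m - 1) :=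
          mul_le_mul_of_nonneg_right (hcle i) (pow_nonneg hε.le _)
        calc lam' * x i ^ (m - 1)
            = lam * x i ^ (m - 1) + c * ε ^ (m - 1) * x i ^ (m - 1) := by rw [hlam']; ring
          _ ≤ tmul C x i + c * ε ^ (m - 1) * 1 := add_le_add (hcons i) h5
          _ ≤ tmul C x i + C i (fun _ => j) * ε ^ (m - 1) := by rw [mul_one]; linarith
          _ ≤ tmul C x' i := hgain i
  -- positivity of the maximizer
  have hpos : ∀ i, 0 < x i := by
    by_contra hcon
    push_neg at hcon
    obtain ⟨j, hj⟩ := hcon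
    have hxj : x j = 0 := le_antisymm hj (hx0 j)
    have hex : ∃ i0, 0 < x i0 := by
      by_contra hall
      push_neg at hall
      have h1 : (1:ℝ) = 0 := by
        rw [← hxs]
        exact Finset.sum_eq_zero fun i _ => le_antisymm (hall i) (hx0 i)
      norm_num at h1
    obtain ⟨i0, hi0⟩ := hex
    have hδ : 0 < tmul C x j := by
      rw [tmul]
      refine Finset.sum_pos'
        (fun f _ => mul_nonneg (hC0 j f) (Finset.prod_nonneg fun t _ => hx0 _)) ?_
      exact ⟨(fun _ => i0), Finset.mem_univ _,
        mul_pos (hC j _) (Finset.prod_pos fun t _ => hi0)⟩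
    set c := Finset.univ.inf' Finset.univ_nonempty (fun i => C i (fun _ => j)) with hcdef
    have hcpos : 0 < c := by
      rw [hcdef, Finset.lt_inf'_iff]
      exact fun i _ => hC i _
    set δ := tmul C x j with hδdef
    have hlc : 0 < lam + c := by linarith
    set ε := min (min 1 (c + 1)⁻¹) (δ / (lam + c)) with hεdef
    have hε : 0 < ε := lt_min (lt_min one_pos (by positivity)) (by positivity)
    have hε1 : ε ≤ 1 := le_trans (min_le_left _ _) (min_le_left _ _)
    have hεc : ε ≤ (c + 1)⁻¹ := le_trans (min_le_left _ _) (min_le_right _ _)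
    have hεδ : ε ≤ δ / (lam + c) := min_le_right _ _
    have hεa : ε ^ (m - 1) ≤ ε := pow_le_of_le_one hε.le hε1 ha
    refine himpj j ε hε ?_ ?_
    · rw [← hcdef]
      calc c * ε ^ (m - 1) ≤ c * ε := mul_le_mul_of_nonneg_left hεa hcpos.le
        _ ≤ c * (c + 1)⁻¹ := mul_le_mul_of_nonneg_left hεc hcpos.le
        _ ≤ 1 := by
            rw [← div_eq_mul_inv]
            exact (div_le_one (by linarith)).mpr (by linarith)
    · rw [← hcdef, hxj, zero_add]
      have h2 : c * ε ^ (m - 1) ≤ c := by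
        calc c * ε ^ (m - 1) ≤ c * 1 :=
              mul_le_mul_of_nonneg_left (pow_le_one₀ hε.le hε1) hcpos.le
          _ = c := mul_one c
      have h1 : (lam + c * ε ^ (m - 1)) * ε ^ (m - 1) ≤ (lam + c) * ε := by
        calc (lam + c * ε ^ (m - 1)) * ε ^ (m - 1) ≤ (lam + c) * ε ^ (m - 1) :=
              mul_le_mul_of_nonneg_right (by linarith) (pow_nonneg hε.le _)
          _ ≤ (lam + c) * ε := mul_le_mul_of_nonneg_left hεa hlc.le
      have h4 : (lam + c) * ε ≤ δ := by
        rw [mul_comm]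
        exact (le_div_iff₀ hlc).mp hεδ
      rw [← hδdef]
      linarith
  -- equality at the maximizer
  refine ⟨lam, x, hl0, hpos, hxs, fun i0 => ?_⟩
  by_contra hne
  have hlt : lam * x i0 ^ (m - 1) < tmul C x i0 :=
    lt_of_le_of_ne (hcons i0) fun h => hne h.symm
  set c := Finset.univ.inf' Finset.univ_nonempty (fun i => C i (fun _ => i0)) with hcdef
  have hcpos : 0 < c := by
    rw [hcdef, Finset.lt_inf'_iff]
    exact fun i _ => hC i _
  set g : ℝ → ℝ := fun ε => (lam + c * ε ^ (m - 1)) * (x i0 + ε) ^ (m - 1) with hgdef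
  have hgc : Continuous g := by
    refine Continuous.mul ?_ ?_
    · exact continuous_const.add (continuous_const.mul (continuous_pow _))
    · exact (continuous_const.add continuous_id).pow _
  have hg0 : g 0 < tmul C x i0 := by
    have h1 : g 0 = lam * x i0 ^ (m - 1) := by
      simp [hgdef, zero_pow ha]
    rw [h1]
    exact hlt
  have hopen : IsOpen {ε : ℝ | g ε < tmul C x i0} := isOpen_lt hgc continuous_const
  have hmem : {ε : ℝ | g ε < tmul C x i0} ∈ nhds (0:ℝ) := hopen.mem_nhds hg0
  have hmem2 : Set.Iio (min 1 (c + 1)⁻¹) ∈ nhds (0:ℝ) :=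
    Iio_mem_nhds (lt_min one_pos (by positivity))
  have hev : ({ε : ℝ | g ε < tmul C x i0} ∩ Set.Iio (min 1 (c + 1)⁻¹)) ∩ Set.Ioi 0
      ∈ nhdsWithin (0:ℝ) (Set.Ioi 0) :=
    Filter.inter_mem (nhdsWithin_le_nhds (Filter.inter_mem hmem hmem2)) self_mem_nhdsWithin
  obtain ⟨ε, ⟨hgε, hεlt⟩, hεpos⟩ := Filter.nonempty_of_mem hev
  have hεpos' : (0:ℝ) < ε := hεpos
  have hε1 : ε ≤ 1 := le_of_lt (lt_of_lt_of_le hεlt (min_le_left _ _))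
  have hεc : ε ≤ (c + 1)⁻¹ := le_of_lt (lt_of_lt_of_le hεlt (min_le_right _ _))
  have hεa : ε ^ (m - 1) ≤ ε := pow_le_of_le_one hεpos'.le hε1 ha
  refine himpj i0 ε hεpos' ?_ ?_
  · rw [← hcdef]
    calc c * ε ^ (m - 1) ≤ c * ε := mul_le_mul_of_nonneg_left hεa hcpos.le
      _ ≤ c * (c + 1)⁻¹ := mul_le_mul_of_nonneg_left hεc hcpos.le
      _ ≤ 1 := by
          rw [← div_eq_mul_inv]
          exact (div_le_one (by linarith)).mpr (by linarith)
  · rw [← hcdef]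
    exact le_of_lt hgε

end AuxPF


section AuxSemipos

lemma tmul_add (T U : Tensor m n) (x : Fin n → ℝ) :
    tmul (T + U) x = tmul T x + tmul U x := by
  funext i
  simp [tmul, add_mul, Finset.sum_add_distrib]

lemma tmul_smul_left (c : ℝ) (T : Tensor m n) (x : Fin n → ℝ) (i : Fin n) :
    tmul (c • T) x i = c * tmul T x i := by
  simp [tmul, Finset.mul_sum, mul_assoc]

lemma tmul_mono_tensor {T U : Tensor m n} (h : ∀ i f, T i f ≤ U i f) {x : Fin n → ℝ}
    (hx : ∀ i, 0 ≤ x i) (i : Fin n) : tmul T x i ≤ tmul U x i := by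
  refine Finset.sum_le_sum fun f _ => mul_le_mul_of_nonneg_right (h i f) ?_
  exact Finset.prod_nonneg fun t _ => hx (f t)

lemma strongM_semipos (hm : 2 ≤ m) (hn : 1 ≤ n) (B : Tensor m n) (hB : TNonneg B)
    (η : ℝ) (hρ : rho B < η) :
    ∃ x : Fin n → ℝ, (∀ i, 0 < x i) ∧ ∀ i, tmul B x i < η * x i ^ (m - 1) := by
  classical
  by_contra hcon
  push_neg at hcon
  have ha : m - 1 ≠ 0 := by omega
  haveI : Nonempty (Fin n) := ⟨⟨0, hn⟩⟩
  set J : Tensor m n := fun _ _ => (1:ℝ) with hJ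
  set Bk : ℕ → Tensor m n := fun k => B + (1 / (k + 1 : ℝ)) • J with hBk
  have hBkpos : ∀ k, ∀ i f, 0 < Bk k i f := by
    intro k i f
    have h1 : (0:ℝ) < 1 / (k + 1 : ℝ) := by positivity
    have h2 : Bk k i f = B i f + 1 / (k + 1 : ℝ) := by
      simp [hBk, hJ]
    rw [h2]
    linarith [hB i f]
  have hex : ∀ k, ∃ (lam : ℝ) (x : Fin n → ℝ), 0 ≤ lam ∧ (∀ i, 0 < x i) ∧ (∑ i, x i = 1) ∧
      ∀ i, tmul (Bk k) x i = lam * x i ^ (m - 1) := fun k =>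
    exists_pos_eigenpair hm hn (Bk k) (hBkpos k)
  choose lamk xk hlam0 hxpos hxsum heig using hex
  have htm : ∀ k (x : Fin n → ℝ) (i : Fin n),
      tmul (Bk k) x i = tmul B x i + (1 / (k + 1 : ℝ)) * (∑ j, x j) ^ (m - 1) := by
    intro k x i
    rw [hBk]
    have h1 := congrFun (tmul_add B ((1 / (k + 1 : ℝ)) • J) x) i
    rw [Pi.add_apply] at h1
    rw [h1, tmul_smul_left, hJ, tmul_allones]
  have hlamη : ∀ k, η ≤ lamk k := by
    intro k
    by_contra hlt
    push_neg at hlt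
    obtain ⟨i, hi⟩ := hcon (xk k) (hxpos k)
    have h1 : tmul B (xk k) i ≤ tmul (Bk k) (xk k) i := by
      rw [htm k]
      have : (0:ℝ) ≤ (1 / (k + 1 : ℝ)) * (∑ j, xk k j) ^ (m - 1) := by
        rw [hxsum k]; positivity
      linarith
    have h2 := heig k i
    have h3 : lamk k * xk k i ^ (m - 1) < η * xk k i ^ (m - 1) :=
      mul_lt_mul_of_pos_right hlt (pow_pos (hxpos k i) _)
    linarith
  set B1 : Tensor m n := B + J with hB1
  set RS1 : ℝ := ∑ j, tmul B1 (fun _ => 1) j with hRS1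
  have hB1nn : TNonneg B1 := by
    intro i f
    have : B1 i f = B i f + 1 := by simp [hB1, hJ]
    rw [this]; linarith [hB i f]
  have hBknn : ∀ k, TNonneg (Bk k) := fun k i f => (hBkpos k i f).le
  have hBkle : ∀ k i f, Bk k i f ≤ B1 i f := by
    intro k i f
    have h2 : Bk k i f = B i f + 1 / (k + 1 : ℝ) := by simp [hBk, hJ]
    have h3 : B1 i f = B i f + 1 := by simp [hB1, hJ]
    have h4 : 1 / (k + 1 : ℝ) ≤ 1 := by
      rw [div_le_one (by positivity)]
      norm_num
    rw [h2, h3]; linarith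
  have hRS10 : 0 ≤ RS1 :=
    Finset.sum_nonneg fun j _ => tmul_nonneg B1 hB1nn (fun _ => zero_le_one) j
  have hle1 : ∀ (x : Fin n → ℝ), (∀ i, 0 ≤ x i) → (∑ i, x i) = 1 → ∀ i, x i ≤ 1 := by
    intro x h0 hs i
    calc x i ≤ ∑ j, x j := Finset.single_le_sum (fun j _ => h0 j) (Finset.mem_univ i)
      _ = 1 := hs
  have hlamΛ : ∀ k, lamk k ≤ (n : ℝ) ^ (m - 1) * RS1 := by
    intro k
    have hsum1 : ∑ _i : Fin n, (n : ℝ)⁻¹ = 1 := by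
      simp only [Finset.sum_const, Finset.card_univ, Fintype.card_fin, nsmul_eq_mul]
      field_simp
    obtain ⟨i, -, hi⟩ := Finset.exists_le_of_sum_le Finset.univ_nonempty
      (le_of_eq (hsum1.trans (hxsum k).symm))
    have h1 : lamk k * ((n:ℝ)⁻¹) ^ (m - 1) ≤ RS1 := by
      calc lamk k * ((n:ℝ)⁻¹) ^ (m - 1) ≤ lamk k * xk k i ^ (m - 1) :=
            mul_le_mul_of_nonneg_left (pow_le_pow_left₀ (by positivity) hi _) (hlam0 k)
        _ = tmul (Bk k) (xk k) i := (heig k i).symm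
        _ ≤ tmul (Bk k) (fun _ => 1) i := tmul_mono (Bk k) (hBknn k)
            (fun j => (hxpos k j).le) (hle1 (xk k) (fun j => (hxpos k j).le) (hxsum k)) i
        _ ≤ tmul B1 (fun _ => 1) i := tmul_mono_tensor (hBkle k) (fun _ => zero_le_one) i
        _ ≤ RS1 := Finset.single_le_sum (f := fun j => tmul B1 (fun _ => 1) j)
            (fun j _ => tmul_nonneg B1 hB1nn (fun _ => zero_le_one) j) (Finset.mem_univ i)
    have hnn : ((n:ℝ)⁻¹) ^ (m - 1) * (n:ℝ) ^ (m - 1) = 1 := by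
      rw [← mul_pow]
      field_simp
      exact one_pow _
    calc lamk k = lamk k * (((n:ℝ)⁻¹) ^ (m - 1) * (n:ℝ) ^ (m - 1)) := by rw [hnn, mul_one]
      _ = (lamk k * ((n:ℝ)⁻¹) ^ (m - 1)) * (n:ℝ) ^ (m - 1) := by ring
      _ ≤ RS1 * (n:ℝ) ^ (m - 1) := mul_le_mul_of_nonneg_right h1 (by positivity)
      _ = (n:ℝ) ^ (m - 1) * RS1 := by ring
  -- compactness of the simplex
  have hΔc : IsCompact {x : Fin n → ℝ | (∀ i, 0 ≤ x i) ∧ (∑ i, x i) = 1} := by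
    refine IsCompact.of_isClosed_subset
      (isCompact_univ_pi fun _ : Fin n => isCompact_Icc (a := (0:ℝ)) (b := 1)) ?_ ?_
    · have hq : {x : Fin n → ℝ | (∀ i, 0 ≤ x i) ∧ (∑ i, x i) = 1} =
          (⋂ i, {x : Fin n → ℝ | 0 ≤ x i}) ∩ {x | (∑ i, x i) = 1} := by
        ext x
        simp [Set.mem_iInter]
      rw [hq]
      exact (isClosed_iInter fun i => isClosed_le continuous_const (continuous_apply i)).inter
        (isClosed_eq (continuous_finset_sum _ fun i _ => continuous_apply i) continuous_const)
    · rintro x ⟨h0, hs⟩ i -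
      exact ⟨h0 i, hle1 x h0 hs i⟩
  obtain ⟨a, haΔ, φ, hφ, hxa⟩ := hΔc.tendsto_subseq
    (x := xk) (fun k => ⟨fun i => (hxpos k i).le, hxsum k⟩)
  obtain ⟨L, hLmem, ψ, hψ, hlamL⟩ := (isCompact_Icc (a := η) (b := (n : ℝ) ^ (m - 1) * RS1)).tendsto_subseq
    (x := fun k => lamk (φ k)) (fun k => ⟨hlamη _, hlamΛ _⟩)
  have hxa' : Filter.Tendsto (fun k => xk (φ (ψ k))) Filter.atTop (nhds a) :=
    hxa.comp hψ.tendsto_atTop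
  have hL0 : 0 ≤ L := ge_of_tendsto' hlamL fun k => hlam0 _
  have heqa : ∀ i, tmul B a i = L * a i ^ (m - 1) := by
    intro i
    have hFeq : ∀ k, tmul B (xk (φ (ψ k))) i + 1 / ((φ (ψ k) : ℝ) + 1)
        = lamk (φ (ψ k)) * xk (φ (ψ k)) i ^ (m - 1) := by
      intro k
      have h1 := heig (φ (ψ k)) i
      rw [htm, hxsum, one_pow, mul_one] at h1
      exact h1
    have hT1 : Filter.Tendsto (fun k => tmul B (xk (φ (ψ k))) i + 1 / ((φ (ψ k) : ℝ) + 1))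
        Filter.atTop (nhds (tmul B a i + 0)) := by
      refine Filter.Tendsto.add ?_ ?_
      · exact ((cont_tmul B i).tendsto a).comp hxa'
      · exact tendsto_one_div_add_atTop_nhds_zero_nat.comp (hφ.comp hψ).tendsto_atTop
    have hT2 : Filter.Tendsto (fun k => lamk (φ (ψ k)) * xk (φ (ψ k)) i ^ (m - 1))
        Filter.atTop (nhds (L * a i ^ (m - 1))) := by
      refine Filter.Tendsto.mul hlamL ?_
      exact (((continuous_apply i).tendsto a).comp hxa').pow _
    rw [add_zero] at hT1
    exact tendsto_nhds_unique (hT1.congr hFeq) hT2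
  have hae : ∃ i, a i ≠ 0 := by
    by_contra hall
    push_neg at hall
    have h1 : ∑ i, a i = 0 := Finset.sum_eq_zero fun i _ => hall i
    rw [haΔ.2] at h1
    norm_num at h1
  have heigC : IsEigenvalue B (L : ℂ) := by
    refine ⟨fun i => (a i : ℂ), ?_, fun i => ?_⟩
    · obtain ⟨i, hi⟩ := hae
      intro h0
      exact hi (by simpa using congrFun h0 i)
    · have hcast : tmulC B (fun j => (a j : ℂ)) i = ((tmul B a i : ℝ) : ℂ) := by
        simp only [tmulC, tmul]
        push_cast
        rfl
      rw [hcast, heqa i]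
      push_cast
      ring
  have hle : ‖(L : ℂ)‖ ≤ rho B := le_rho B _ heigC
  have habs : ‖(L : ℂ)‖ = L := by
    rw [Complex.norm_real, Real.norm_eq_abs, abs_of_nonneg hL0]
  have hηL : η ≤ L := hLmem.1
  rw [habs] at hle
  linarith

end AuxSemipos


section AuxEntries

lemma sum_shift_up (g : Fin n → ℝ) (v : ℕ) :
    (∑ j : Fin n, if (j : ℕ) = v then g j else 0) = if h : v < n then g ⟨v, h⟩ else 0 := by
  by_cases h : v < n
  · rw [dif_pos h, Finset.sum_eq_single ⟨v, h⟩]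
    · simp
    · intro b _ hb
      rw [if_neg]
      intro hbv
      exact hb (Fin.ext hbv)
    · simp
  · rw [dif_neg h]
    refine Finset.sum_eq_zero fun j _ => ?_
    rw [if_neg]
    intro hj
    exact h (hj ▸ j.isLt)

lemma sum_shift_down (g : Fin n → ℝ) (i : Fin n) :
    (∑ j : Fin n, if (i : ℕ) = (j : ℕ) + 1 then g j else 0)
      = if 1 ≤ (i : ℕ) then g (finShiftDown i 1) else 0 := by
  by_cases h : 1 ≤ (i : ℕ)
  · rw [if_pos h, Finset.sum_eq_single (finShiftDown i 1)]
    · rw [if_pos]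
      simp only [finShiftDown]
      omega
    · intro b _ hb
      rw [if_neg]
      intro hib
      refine hb (Fin.ext ?_)
      simp only [finShiftDown]
      omega
    · simp
  · rw [if_neg h]
    refine Finset.sum_eq_zero fun j _ => ?_
    rw [if_neg]
    intro hj
    omega

lemma idT_const (hm : 2 ≤ m) (i c : Fin n) :
    idT m n i (fun _ => c) = if c = i then 1 else 0 := by
  by_cases h : c = i
  · subst h
    simp [idT]
  · have h2 : ¬ (∀ _t : Fin (m - 1), c = i) := fun hall => h (hall ⟨0, by omega⟩)
    simp only [idT, if_neg h2, if_neg h]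

lemma idT_nonconst (i : Fin n) (f : Fin (m - 1) → Fin n) (hf : ¬ ∃ c, ∀ t, f t = c) :
    idT m n i f = 0 := by
  rw [idT, if_neg]
  intro hall
  exact hf ⟨i, hall⟩

lemma mmul_idT_const (hm : 2 ≤ m) (M : Matrix (Fin n) (Fin n) ℝ) (i c : Fin n) :
    mmul M (idT m n) i (fun _ => c) = M i c := by
  rw [mmul, Finset.sum_eq_single c]
  · rw [idT_const hm]
    simp
  · intro b _ hb
    rw [idT_const hm, if_neg (Ne.symm hb), mul_zero]
  · simp

lemma mmul_idT_nonconst (M : Matrix (Fin n) (Fin n) ℝ) (i : Fin n)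
    (f : Fin (m - 1) → Fin n) (hf : ¬ ∃ c, ∀ t, f t = c) :
    mmul M (idT m n) i f = 0 := by
  rw [mmul]
  refine Finset.sum_eq_zero fun j _ => ?_
  rw [idT_nonconst j f hf, mul_zero]

lemma Ltens_const (hm : 2 ≤ m) (A : Tensor m n) (i c : Fin n) :
    Ltens A i (fun _ => c) = if (c : ℕ) < (i : ℕ) then -(maj A i c) else 0 := by
  rw [Ltens, mmul_idT_const hm]
  simp [Lmat]

lemma Ltens_nonconst (A : Tensor m n) (i : Fin n) (f : Fin (m - 1) → Fin n)
    (hf : ¬ ∃ c, ∀ t, f t = c) : Ltens A i f = 0 :=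
  mmul_idT_nonconst _ i f hf

lemma mmulS_apply (A : Tensor m n) (T : Tensor m n) (α : Fin n → ℝ) (i : Fin n)
    (f : Fin (m - 1) → Fin n) :
    mmul (Smat A α 1) T i f = if h : (i : ℕ) + 1 < n then
      -(α i * maj A i (finShiftUp i 1 h)) * T (finShiftUp i 1 h) f else 0 := by
  rw [mmul]
  have h1 : ∀ j : Fin n, Smat A α 1 i j * T j f
      = if (j : ℕ) = (i : ℕ) + 1 then (-(α i * maj A i j)) * T j f else 0 := by
    intro j
    simp only [Smat]
    split <;> simp
  rw [Finset.sum_congr rfl fun j _ => h1 j, sum_shift_up]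
  rfl

lemma mmulK_apply (A : Tensor m n) (T : Tensor m n) (β : Fin n → ℝ) (i : Fin n)
    (f : Fin (m - 1) → Fin n) :
    mmul (Kmat A β 1) T i f = if 1 ≤ (i : ℕ) then
      -(β i * maj A i (finShiftDown i 1)) * T (finShiftDown i 1) f else 0 := by
  rw [mmul]
  have h1 : ∀ j : Fin n, Kmat A β 1 i j * T j f
      = if (i : ℕ) = (j : ℕ) + 1 then (-(β i * maj A i j)) * T j f else 0 := by
    intro j
    simp only [Kmat]
    split <;> simp
  rw [Finset.sum_congr rfl fun j _ => h1 j, sum_shift_down]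

end AuxEntries


lemma majE5_eq (hm : 2 ≤ m) (A : Tensor m n) (α β : Fin n → ℝ) :
    maj (E5 A α β) = Matrix.diagonal (fun i => 1 - condExpr A α β 1 i) := by
  ext i j
  simp only [maj, E5]
  rw [mmul_idT_const hm]
  have hSK : (Smat A α 1 * Kfull A) i j = if j = i then
      (if h : (i : ℕ) + 1 < n then
        α i * maj A i (finShiftUp i 1 h) * maj A (finShiftUp i 1 h) i else 0) else 0 := by
    rw [Matrix.mul_apply]
    have h1 : ∀ t : Fin n, Smat A α 1 i t * Kfull A t j
        = if (t : ℕ) = (i : ℕ) + 1 then (-(α i * maj A i t) * Kfull A t j) else 0 := by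
      intro t
      simp only [Smat]
      split <;> simp
    rw [Finset.sum_congr rfl fun t _ => h1 t, sum_shift_up]
    by_cases h : (i : ℕ) + 1 < n
    · rw [dif_pos h]
      show -(α i * maj A i (finShiftUp i 1 h)) * Kfull A (finShiftUp i 1 h) j = _
      by_cases hji : j = i
      · rw [if_pos hji, dif_pos h]
        have hk : Kfull A (finShiftUp i 1 h) j = -(1 * maj A (finShiftUp i 1 h) j) := by
          simp only [Kfull, Kmat]
          rw [if_pos]
          simp [finShiftUp, hji]
        rw [hk, hji]
        ring
      · have hk : Kfull A (finShiftUp i 1 h) j = 0 := by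
          simp only [Kfull, Kmat]
          rw [if_neg]
          intro hc
          simp only [finShiftUp] at hc
          exact hji (Fin.ext (by omega))
        rw [hk, if_neg hji, mul_zero]
    · rw [dif_neg h]
      by_cases hji : j = i
      · rw [if_pos hji, dif_neg h]
      · rw [if_neg hji]
  have hKS : (Kmat A β 1 * Sfull A) i j = if j = i then
      (if 1 ≤ (i : ℕ) then
        β i * maj A i (finShiftDown i 1) * maj A (finShiftDown i 1) i else 0) else 0 := by
    rw [Matrix.mul_apply]
    have h1 : ∀ t : Fin n, Kmat A β 1 i t * Sfull A t j
        = if (i : ℕ) = (t : ℕ) + 1 then (-(β i * maj A i t) * Sfull A t j) else 0 := by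
      intro t
      simp only [Kmat]
      split <;> simp
    rw [Finset.sum_congr rfl fun t _ => h1 t, sum_shift_down]
    by_cases h : 1 ≤ (i : ℕ)
    · rw [if_pos h]
      by_cases hji : j = i
      · rw [if_pos hji, if_pos h]
        have hk : Sfull A (finShiftDown i 1) j = -(1 * maj A (finShiftDown i 1) j) := by
          simp only [Sfull, Smat]
          rw [if_pos]
          simp only [finShiftDown, hji]
          omega
        rw [hk, hji]
        ring
      · have hk : Sfull A (finShiftDown i 1) j = 0 := by
          simp only [Sfull, Smat]
          rw [if_neg]
          intro hc
          simp only [finShiftDown] at hc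
          exact hji (Fin.ext (by omega))
        rw [hk, if_neg hji, mul_zero]
    · rw [if_neg h]
      by_cases hji : j = i
      · rw [if_pos hji, if_neg h]
      · rw [if_neg hji]
  simp only [Matrix.sub_apply, Matrix.one_apply, hSK, hKS, Matrix.diagonal_apply]
  by_cases hij : i = j
  · rw [if_pos hij, if_pos hij.symm, if_pos hij.symm, if_pos hij, condExpr]
    have hgen : ∀ X Y : ℝ, 1 - X - Y = 1 - (X + Y) := fun X Y => by ring
    exact hgen _ _
  · rw [if_neg hij, if_neg (fun h => hij h.symm), if_neg (fun h => hij h.symm), if_neg hij]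
    norm_num


lemma F5_nonneg (hm : 2 ≤ m) (A : Tensor m n) (η : ℝ) (B : Tensor m n)
    (hBnn : TNonneg B) (hAeq : A = η • idT m n - B) (hdiag : UnitDiag A)
    (α β : Fin n → ℝ)
    (hα : ∀ i : Fin n, (i : ℕ) + 1 < n → α i ∈ Set.Icc (0 : ℝ) 1)
    (hβ : ∀ i : Fin n, 1 ≤ (i : ℕ) → β i ∈ Set.Icc (0 : ℝ) 1) :
    TNonneg (F5 A α β) := by
  classical
  have hoffT : ∀ i (f : Fin (m - 1) → Fin n), ¬ (∀ t, f t = i) → A i f ≤ 0 := by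
    intro i f hf
    rw [hAeq]
    have h1 : (η • idT m n - B) i f = η * idT m n i f - B i f := rfl
    rw [h1]
    simp only [idT]
    rw [if_neg hf, mul_zero, zero_sub]
    exact neg_nonpos.mpr (hBnn i f)
  have hoffM : ∀ p q : Fin n, (q : ℕ) ≠ (p : ℕ) → maj A p q ≤ 0 := by
    intro p q hq
    show A p (fun _ => q) ≤ 0
    refine hoffT p _ fun hall => ?_
    exact hq (congrArg Fin.val (hall ⟨0, by omega⟩))
  have hFc : ∀ i c : Fin n, Ftens A i (fun _ => c)
      = if (i : ℕ) < (c : ℕ) then -(maj A i c) else 0 := by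
    intro i c
    have h0 : Ftens A i (fun _ => c)
        = idT m n i (fun _ => c) - Ltens A i (fun _ => c) - A i (fun _ => c) := rfl
    rw [h0, idT_const hm, Ltens_const hm]
    have hmaj : A i (fun _ => c) = maj A i c := rfl
    rw [hmaj]
    rcases Nat.lt_trichotomy (c : ℕ) (i : ℕ) with h | h | h
    · rw [if_neg (fun hc : c = i => by rw [hc] at h; omega), if_pos h, if_neg (by omega)]
      ring
    · have hc : c = i := Fin.ext h
      rw [if_pos hc, if_neg (by omega), if_neg (by omega)]
      have h2 : maj A i c = 1 := by rw [hc]; exact hdiag i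
      rw [h2]
      norm_num
    · rw [if_neg (fun hc : c = i => by rw [hc] at h; omega), if_neg (by omega), if_pos h]
      ring
  have hFnc : ∀ i (f : Fin (m - 1) → Fin n), (¬ ∃ c, ∀ t, f t = c) → Ftens A i f = -A i f := by
    intro i f hf
    have h0 : Ftens A i f = idT m n i f - Ltens A i f - A i f := rfl
    rw [h0, idT_nonconst i f hf, Ltens_nonconst A i f hf]
    ring
  have hLpc : ∀ i c : Fin n, Lprime A i (fun _ => c)
      = if (c : ℕ) < (i : ℕ) ∧ (c : ℕ) + 1 ≠ (i : ℕ) then -(maj A i c) else 0 := by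
    intro i c
    have h0 : Lprime A i (fun _ => c)
        = Ltens A i (fun _ => c) - mmul (Kfull A) (idT m n) i (fun _ => c) := rfl
    rw [h0, Ltens_const hm, mmul_idT_const hm]
    simp only [Kfull, Kmat]
    by_cases h1 : (c : ℕ) < (i : ℕ)
    · by_cases h2 : (i : ℕ) = (c : ℕ) + 1
      · rw [if_pos h1, if_pos h2, if_neg (by omega)]
        ring
      · rw [if_pos h1, if_neg h2, if_pos (by omega)]
        ring
    · rw [if_neg h1, if_neg (by omega), if_neg (by omega)]
      ring
  have hFpc : ∀ i c : Fin n, Fprime A i (fun _ => c)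
      = if (i : ℕ) < (c : ℕ) ∧ (c : ℕ) ≠ (i : ℕ) + 1 then -(maj A i c) else 0 := by
    intro i c
    have h0 : Fprime A i (fun _ => c)
        = Ftens A i (fun _ => c) - mmul (Sfull A) (idT m n) i (fun _ => c) := rfl
    rw [h0, hFc, mmul_idT_const hm]
    simp only [Sfull, Smat]
    by_cases h1 : (i : ℕ) < (c : ℕ)
    · by_cases h2 : (c : ℕ) = (i : ℕ) + 1
      · rw [if_pos h1, if_pos h2, if_neg (by omega)]
        ring
      · rw [if_pos h1, if_neg h2, if_pos (by omega)]
        ring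
    · rw [if_neg h1, if_neg (by omega), if_neg (by omega)]
      ring
  have hLpnc : ∀ i (f : Fin (m - 1) → Fin n), (¬ ∃ c, ∀ t, f t = c) → Lprime A i f = 0 := by
    intro i f hf
    have h0 : Lprime A i f = Ltens A i f - mmul (Kfull A) (idT m n) i f := rfl
    rw [h0, Ltens_nonconst A i f hf, mmul_idT_nonconst _ i f hf]
    ring
  have hFpnc : ∀ i (f : Fin (m - 1) → Fin n), (¬ ∃ c, ∀ t, f t = c) → Fprime A i f = -A i f := by
    intro i f hf
    have h0 : Fprime A i f = Ftens A i f - mmul (Sfull A) (idT m n) i f := rfl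
    rw [h0, hFnc i f hf, mmul_idT_nonconst _ i f hf]
    ring
  intro i f
  have hF5 : F5 A α β i f = Ltens A i f + Ftens A i f
      - mmul (Smat A α 1 + Kmat A β 1) (idT m n) i f
      + mmul (Smat A α 1) (Lprime A + Ftens A) i f
      + mmul (Kmat A β 1) (Ltens A + Fprime A) i f := rfl
  rw [hF5]
  have hScoeff : ∀ h : (i : ℕ) + 1 < n, 0 ≤ -(α i * maj A i (finShiftUp i 1 h)) := by
    intro h
    have h1 := (hα i h).1
    have h2 : maj A i (finShiftUp i 1 h) ≤ 0 :=
      hoffM i (finShiftUp i 1 h) (by simp only [finShiftUp]; omega)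
    have h3 := mul_nonneg h1 (neg_nonneg.mpr h2)
    linarith
  have hKcoeff : ∀ _h : 1 ≤ (i : ℕ), 0 ≤ -(β i * maj A i (finShiftDown i 1)) := by
    intro h
    have h1 := (hβ i h).1
    have h2 : maj A i (finShiftDown i 1) ≤ 0 :=
      hoffM i (finShiftDown i 1) (by simp only [finShiftDown]; omega)
    have h3 := mul_nonneg h1 (neg_nonneg.mpr h2)
    linarith
  by_cases hcst : ∃ c, ∀ t, f t = c
  · obtain ⟨c, hc⟩ := hcst
    have hfc : f = fun _ => c := funext hc
    subst hfc
    have e4 : 0 ≤ mmul (Smat A α 1) (Lprime A + Ftens A) i (fun _ => c) := by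
      rw [mmulS_apply]
      by_cases h : (i : ℕ) + 1 < n
      · rw [dif_pos h]
        refine mul_nonneg (hScoeff h) ?_
        set u := finShiftUp i 1 h with hu
        have h5 : (Lprime A + Ftens A) u (fun _ => c)
            = Lprime A u (fun _ => c) + Ftens A u (fun _ => c) := rfl
        rw [h5, hLpc, hFc]
        have hle1 : 0 ≤ (if (c : ℕ) < (u : ℕ) ∧ (c : ℕ) + 1 ≠ (u : ℕ)
            then -(maj A u c) else 0) := by
          split_ifs with h7
          · linarith [hoffM u c (by omega)]
          · exact le_refl 0
        have hle2 : 0 ≤ (if (u : ℕ) < (c : ℕ) then -(maj A u c) else 0) := by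
          split_ifs with h7
          · linarith [hoffM u c (by omega)]
          · exact le_refl 0
        linarith
      · rw [dif_neg h]
    have e5 : 0 ≤ mmul (Kmat A β 1) (Ltens A + Fprime A) i (fun _ => c) := by
      rw [mmulK_apply]
      by_cases h : 1 ≤ (i : ℕ)
      · rw [if_pos h]
        refine mul_nonneg (hKcoeff h) ?_
        set u := finShiftDown i 1 with hu
        have h5 : (Ltens A + Fprime A) u (fun _ => c)
            = Ltens A u (fun _ => c) + Fprime A u (fun _ => c) := rfl
        rw [h5, Ltens_const hm, hFpc]
        have hle1 : 0 ≤ (if (c : ℕ) < (u : ℕ) then -(maj A u c) else 0) := by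
          split_ifs with h7
          · linarith [hoffM u c (by omega)]
          · exact le_refl 0
        have hle2 : 0 ≤ (if (u : ℕ) < (c : ℕ) ∧ (c : ℕ) ≠ (u : ℕ) + 1
            then -(maj A u c) else 0) := by
          split_ifs with h7
          · linarith [hoffM u c (by omega)]
          · exact le_refl 0
        linarith
      · rw [if_neg h]
    have e6 : 0 ≤ Ltens A i (fun _ => c) + Ftens A i (fun _ => c)
        - mmul (Smat A α 1 + Kmat A β 1) (idT m n) i (fun _ => c) := by
      rw [Ltens_const hm, hFc, mmul_idT_const hm]
      have hadd : (Smat A α 1 + Kmat A β 1) i c = Smat A α 1 i c + Kmat A β 1 i c := rfl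
      rw [hadd]
      simp only [Smat, Kmat]
      rcases Nat.lt_trichotomy (c : ℕ) (i : ℕ) with h | h | h
      · by_cases h2 : (i : ℕ) = (c : ℕ) + 1
        · rw [if_pos h, if_neg (by omega), if_neg (by omega), if_pos h2]
          have hb := hβ i (by omega)
          have hmle := hoffM i c (by omega)
          nlinarith [mul_nonneg (sub_nonneg.mpr hb.2) (neg_nonneg.mpr hmle)]
        · rw [if_pos h, if_neg (by omega), if_neg (by omega), if_neg h2]
          have hmle := hoffM i c (by omega)
          linarith
      · rw [if_neg (by omega), if_neg (by omega), if_neg (by omega), if_neg (by omega)]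
        norm_num
      · by_cases h2 : (c : ℕ) = (i : ℕ) + 1
        · rw [if_neg (by omega), if_pos h, if_pos h2, if_neg (by omega)]
          have ha' := hα i (by have := c.isLt; omega)
          have hmle := hoffM i c (by omega)
          nlinarith [mul_nonneg (sub_nonneg.mpr ha'.2) (neg_nonneg.mpr hmle)]
        · rw [if_neg (by omega), if_pos h, if_neg h2, if_neg (by omega)]
          have hmle := hoffM i c (by omega)
          linarith
    linarith
  · have hfi : ∀ j : Fin n, ¬ (∀ t, f t = j) := fun j hall => hcst ⟨j, hall⟩
    have h1 : Ltens A i f = 0 := Ltens_nonconst A i f hcst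
    have h2 : Ftens A i f = -A i f := hFnc i f hcst
    have h3 : mmul (Smat A α 1 + Kmat A β 1) (idT m n) i f = 0 := mmul_idT_nonconst _ i f hcst
    have h4 : 0 ≤ mmul (Smat A α 1) (Lprime A + Ftens A) i f := by
      rw [mmulS_apply]
      by_cases h : (i : ℕ) + 1 < n
      · rw [dif_pos h]
        refine mul_nonneg (hScoeff h) ?_
        have h5 : (Lprime A + Ftens A) (finShiftUp i 1 h) f
            = Lprime A (finShiftUp i 1 h) f + Ftens A (finShiftUp i 1 h) f := rfl
        rw [h5, hLpnc _ f hcst, hFnc _ f hcst]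
        have h6 := hoffT (finShiftUp i 1 h) f (hfi _)
        linarith
      · rw [dif_neg h]
    have h5 : 0 ≤ mmul (Kmat A β 1) (Ltens A + Fprime A) i f := by
      rw [mmulK_apply]
      by_cases h : 1 ≤ (i : ℕ)
      · rw [if_pos h]
        refine mul_nonneg (hKcoeff h) ?_
        have h6 : (Ltens A + Fprime A) (finShiftDown i 1) f
            = Ltens A (finShiftDown i 1) f + Fprime A (finShiftDown i 1) f := rfl
        rw [h6, Ltens_nonconst A _ f hcst, hFpnc _ f hcst]
        have h7 := hoffT (finShiftDown i 1) f (hfi _)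
        linarith
      · rw [if_neg h]
    have h6 := hoffT i f (hfi i)
    rw [h1, h2, h3]
    linarith

theorem stmt3 {m n : ℕ} (hm : 2 ≤ m) (hn : 2 ≤ n)
    (A : Tensor m n) (hA : StrongM A) (hdiag : UnitDiag A)
    (α β : Fin n → ℝ)
    (hα : ∀ i : Fin n, (i : ℕ) + 1 < n → α i ∈ Set.Icc (0 : ℝ) 1)
    (hβ : ∀ i : Fin n, 1 ≤ (i : ℕ) → β i ∈ Set.Icc (0 : ℝ) 1)
    (hcond : Cond A α β 1) :
    IsUnit (maj (E5 A α β)).det ∧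
    (∀ i j, 0 ≤ (maj (E5 A α β))⁻¹ i j) ∧
    TNonneg (F5 A α β) ∧
    rho (mmul (maj (E5 A α β))⁻¹ (F5 A α β)) < 1 := by
  classical
  obtain ⟨η, B, hBnn, hρ, hAeq⟩ := hA
  have hmajE5 := majE5_eq hm A α β
  have hd0 : ∀ i, 0 < 1 - condExpr A α β 1 i := fun i => by
    have := (hcond i).2
    linarith
  have hoffM : ∀ p q : Fin n, (q : ℕ) ≠ (p : ℕ) → maj A p q ≤ 0 := by
    intro p q hq
    show A p (fun _ => q) ≤ 0
    rw [hAeq]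
    have h1 : (η • idT m n - B) p (fun _ => q) = η * idT m n p (fun _ => q) - B p _ := rfl
    rw [h1, idT_const hm, if_neg (fun hc : q = p => hq (congrArg Fin.val hc)), mul_zero,
      zero_sub]
    exact neg_nonpos.mpr (hBnn p _)
  -- conjunct 1
  have hdet : IsUnit (maj (E5 A α β)).det := by
    rw [hmajE5, Matrix.det_diagonal]
    refine isUnit_iff_ne_zero.mpr (Finset.prod_ne_zero_iff.mpr fun i _ => ?_)
    exact ne_of_gt (hd0 i)
  -- conjunct 2
  have hinv : (maj (E5 A α β))⁻¹ = Matrix.diagonal (fun i => (1 - condExpr A α β 1 i)⁻¹) := by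
    rw [hmajE5, Matrix.inv_diagonal]
    have hu : ∀ i, (1 - condExpr A α β 1 i) ≠ 0 := fun i => ne_of_gt (hd0 i)
    let u : (Fin n → ℝ)ˣ :=
      ⟨fun i => 1 - condExpr A α β 1 i, fun i => (1 - condExpr A α β 1 i)⁻¹,
        funext fun i => mul_inv_cancel₀ (hu i), funext fun i => inv_mul_cancel₀ (hu i)⟩
    have h8 : Ring.inverse ((fun i => 1 - condExpr A α β 1 i) : Fin n → ℝ)
        = ((u⁻¹ : (Fin n → ℝ)ˣ) : Fin n → ℝ) := Ring.inverse_unit u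
    rw [h8]
    rfl
  have hinvnn : ∀ i j, 0 ≤ (maj (E5 A α β))⁻¹ i j := by
    intro i j
    rw [hinv, Matrix.diagonal_apply]
    split_ifs
    · exact inv_nonneg.mpr (hd0 _).le
    · exact le_refl 0
  -- conjunct 3
  have hF5nn : TNonneg (F5 A α β) := F5_nonneg hm A η B hBnn hAeq hdiag α β hα hβ
  -- conjunct 4
  obtain ⟨x, hxpos, hxsp⟩ := strongM_semipos hm (by omega) B hBnn η hρ
  have hAx : ∀ i, 0 < tmul A x i := by
    intro i
    have h1 : tmul A x i = η * x i ^ (m - 1) - tmul B x i := by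
      rw [hAeq]
      have h2 := congrFun (tmul_sub (η • idT m n) B x) i
      rw [Pi.sub_apply] at h2
      rw [h2, tmul_smul_left, tmul_idT hm]
    rw [h1]
    have := hxsp i
    linarith
  have hPx : ∀ i, 0 < tmul (precond A α β 1 1) x i := by
    intro i
    rw [precond, tmul_mmul]
    have hPnn : ∀ j, 0 ≤ Pmat A α β 1 1 i j := by
      intro j
      have h2 : Pmat A α β 1 1 i j
          = (1 : Matrix (Fin n) (Fin n) ℝ) i j + Smat A α 1 i j + Kmat A β 1 i j := rfl
      rw [h2, Matrix.one_apply]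
      have hS : 0 ≤ Smat A α 1 i j := by
        simp only [Smat]
        split_ifs with h
        · have hin : (i : ℕ) + 1 < n := h ▸ j.isLt
          have h3 := (hα i hin).1
          have h4 := hoffM i j (by omega)
          have h5 := mul_nonneg h3 (neg_nonneg.mpr h4)
          linarith
        · exact le_refl 0
      have hK : 0 ≤ Kmat A β 1 i j := by
        simp only [Kmat]
        split_ifs with h
        · have h3 := (hβ i (by omega)).1
          have h4 := hoffM i j (by omega)
          have h5 := mul_nonneg h3 (neg_nonneg.mpr h4)
          linarith
        · exact le_refl 0
      split_ifs <;> linarith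
    refine Finset.sum_pos' (fun j _ => mul_nonneg (hPnn j) (hAx j).le)
      ⟨i, Finset.mem_univ i, ?_⟩
    have hPdiag : Pmat A α β 1 1 i i = 1 := by
      have h2 : Pmat A α β 1 1 i i
          = (1 : Matrix (Fin n) (Fin n) ℝ) i i + Smat A α 1 i i + Kmat A β 1 i i := rfl
      rw [h2, Matrix.one_apply_eq]
      simp only [Smat, Kmat]
      rw [if_neg (by omega), if_neg (by omega)]
      norm_num
    rw [hPdiag, one_mul]
    exact hAx i
  set T := mmul (maj (E5 A α β))⁻¹ (F5 A α β) with hT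
  have hE5x : ∀ i, tmul (E5 A α β) x i = (1 - condExpr A α β 1 i) * x i ^ (m - 1) := by
    intro i
    rw [E5, tmul_mmul]
    have h3 : ∀ j, (1 - Smat A α 1 * Kfull A - Kmat A β 1 * Sfull A) i j * tmul (idT m n) x j
        = Matrix.diagonal (fun i => 1 - condExpr A α β 1 i) i j * x j ^ (m - 1) := by
      intro j
      rw [tmul_idT hm]
      congr 1
      have h4 : (1 - Smat A α 1 * Kfull A - Kmat A β 1 * Sfull A) i j = maj (E5 A α β) i j :=
        (mmul_idT_const hm _ i j).symm
      rw [h4, hmajE5]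
    rw [Finset.sum_congr rfl fun j _ => h3 j, Finset.sum_eq_single i]
    · rw [Matrix.diagonal_apply_eq]
    · intro b _ hb
      rw [Matrix.diagonal_apply_ne _ (Ne.symm hb), zero_mul]
    · simp
  have hkey : ∀ i, tmul (F5 A α β) x i < (1 - condExpr A α β 1 i) * x i ^ (m - 1) := by
    intro i
    have h1 : tmul (E5 A α β) x i - tmul (F5 A α β) x i = tmul (precond A α β 1 1) x i := by
      rw [← E5_sub_F5 A α β, tmul_sub]
      rfl
    have h3 := hPx i
    have h2 := hE5x i
    linarith
  have hTx : ∀ i, tmul T x i < x i ^ (m - 1) := by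
    intro i
    rw [hT, tmul_mmul, hinv, Finset.sum_eq_single i]
    · rw [Matrix.diagonal_apply_eq]
      have h4 := hkey i
      have h5 := hd0 i
      calc (1 - condExpr A α β 1 i)⁻¹ * tmul (F5 A α β) x i
          < (1 - condExpr A α β 1 i)⁻¹ * ((1 - condExpr A α β 1 i) * x i ^ (m - 1)) :=
            mul_lt_mul_of_pos_left h4 (inv_pos.mpr h5)
        _ = x i ^ (m - 1) := by
            rw [← mul_assoc, inv_mul_cancel₀ (ne_of_gt h5), one_mul]
    · intro b _ hb
      rw [Matrix.diagonal_apply_ne _ (Ne.symm hb), zero_mul]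
    · simp
  have hTnn : TNonneg T := by
    intro p g
    rw [hT]
    simp only [mmul]
    exact Finset.sum_nonneg fun j _ => mul_nonneg (hinvnn p j) (hF5nn j g)
  haveI hnnF : Nonempty (Fin n) := ⟨⟨0, by omega⟩⟩
  set cbound := Finset.univ.sup' Finset.univ_nonempty
    (fun i => tmul T x i / x i ^ (m - 1)) with hcb
  have hclt : cbound < 1 := by
    rw [hcb, Finset.sup'_lt_iff]
    intro i _
    rw [div_lt_one (pow_pos (hxpos i) _)]
    exact hTx i
  have hc0 : 0 ≤ cbound := by
    set i0 : Fin n := ⟨0, by omega⟩ with hi0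
    have h0 : 0 ≤ tmul T x i0 / x i0 ^ (m - 1) :=
      div_nonneg (tmul_nonneg T hTnn (fun j => (hxpos j).le) _)
        (pow_nonneg (hxpos _).le _)
    exact le_trans h0 (Finset.le_sup' (fun j => tmul T x j / x j ^ (m - 1))
      (Finset.mem_univ i0))
  have hrho : rho T ≤ cbound := by
    refine rho_le_of_forall T cbound hc0 fun lam hlam => ?_
    obtain ⟨i, hi⟩ := eig_bound T x hxpos lam hlam
    have h6 : ∑ f, |T i f| * ∏ t, x (f t) = tmul T x i := by
      rw [tmul]
      exact Finset.sum_congr rfl fun f _ => by rw [abs_of_nonneg (hTnn i f)]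
    rw [h6] at hi
    have h7 : ‖lam‖ ≤ tmul T x i / x i ^ (m - 1) := by
      rw [le_div_iff₀ (pow_pos (hxpos i) _)]
      exact hi
    exact le_trans h7 (Finset.le_sup' (fun j => tmul T x j / x j ^ (m - 1))
      (Finset.mem_univ i))
  exact ⟨hdet, hinvnn, hF5nn, lt_of_le_of_lt hrho hclt⟩

end

end MultilinearPaper
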